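/- Let r ≥ 1 be an integer and let b, d, e be real numbers with b > 0, e ≥ 0, d ≥ 0, and d > 0 if r > 1. Set ρ_j := (r−j)d/2 + e/2 + b/4 for 1 ≤ j ≤ r, p := (e+1)+(r−1)d+b/2, and n := r(p+b/2). Then ((2ρ_1)(2ρ_1+1))/((2ρ_1+b/2+1)(2ρ_1+b/2+e)) · ∏_{j=2}^r ((ρ_1−ρ_j)(ρ_1+ρ_j))/((ρ_1−ρ_j+d/2)(ρ_1+ρ_j+d/2)) = p/(2n). -/

import Mathlib

/-!
Since `ρ_1 - ρ_j = (j - 1) d/2` and `ρ_1 + ρ_j + d/2 = 2ρ_1 - (j - 2) d/2`, the `j`-th factor of the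
product is `F j / F (j - 1)` with `F j = (2ρ_1 - (j - 1) d/2) / j`, so the product telescopes to
`F r / F 1`. As `p = 2ρ_1 + 1`, `n = r (2ρ_1 + b/2 + 1)` and `2ρ_1 - (r - 1) d/2 = (2ρ_1 + b/2 + e)/2`,
everything else cancels.
-/

open Finset

theorem Finset.prod_Ico_div_of_ne_zero {G₀ : Type*} [CommGroupWithZero G₀] (f : ℕ → G₀)
    {m n : ℕ} (hmn : m < n) (hf : ∀ i ∈ Ico m n, f i ≠ 0) :
    ∏ i ∈ Ico m n, f (i + 1) / f i = f n / f m := by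
  induction n, hmn using Nat.le_induction with
  | base => simp
  | succ n hmn ih =>
    have hfn : f n ≠ 0 := hf n (by simp; omega)
    rw [prod_Ico_succ_top (by omega), ih fun i hi => hf i (by simp at hi ⊢; omega), mul_comm,
      div_mul_div_cancel₀ hfn]

theorem prod_Icc_two_arith_prog_ratio {K : Type*} [Field K] [CharZero K] {r : ℕ} (hr : 1 ≤ r)
    (ρ δ : K) (σ : ℕ → K) (hσ : ∀ j, σ j = ρ - ((j : K) - 1) * δ) (hδ : 1 < r → δ ≠ 0)
    (h2ρ : 2 * ρ ≠ 0) (hρ : ∀ i ∈ Ioo 1 r, 2 * ρ - ((i : K) - 1) * δ ≠ 0) :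
    ∏ j ∈ Icc 2 r, ((ρ - σ j) * (ρ + σ j)) / ((ρ - σ j + δ) * (ρ + σ j + δ))
      = (2 * ρ - ((r : K) - 1) * δ) / (r * (2 * ρ)) := by
  obtain rfl | hr := hr.eq_or_lt
  · simp [h2ρ]
  have hρ' : ∀ i ∈ Ico 1 r, 2 * ρ - ((i : K) - 1) * δ ≠ 0 := fun i hi => by
    obtain rfl | hi1 := (mem_Ico.mp hi).1.eq_or_lt
    · simpa using h2ρ
    · exact hρ i (mem_Ioo.mpr ⟨hi1, (mem_Ico.mp hi).2⟩)
  set F : ℕ → K := fun i => (2 * ρ - ((i : K) - 1) * δ) / i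
  have hF : ∀ i ∈ Ico 1 r, F i ≠ 0 := fun i hi =>
    div_ne_zero (hρ' i hi) (Nat.cast_ne_zero.mpr (by simp at hi; omega))
  have hδ0 : δ ≠ 0 := hδ hr
  have hfactor : ∀ i : ℕ,
      ((ρ - σ (i + 1)) * (ρ + σ (i + 1))) / ((ρ - σ (i + 1) + δ) * (ρ + σ (i + 1) + δ))
        = F (i + 1) / F i := fun i => by
    have hσ' : σ (i + 1) = ρ - i * δ := by rw [hσ]; push_cast; ring
    rw [hσ', show ρ - (ρ - i * δ) + δ = (i + 1) * δ by ring,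
      show ρ + (ρ - i * δ) + δ = 2 * ρ - ((i : K) - 1) * δ by ring]
    simp only [F]
    push_cast
    field_simp
    ring
  rw [← Ico_add_one_right_eq_Icc, ← prod_Ico_add' _ 1 r 1,
    prod_congr rfl fun i _ => hfactor i, prod_Ico_div_of_ne_zero F hr hF]
  simp [F, div_div]

theorem c_function_quotient_eval (r : ℕ) (hr : 1 ≤ r) (b d e : ℝ)
    (hb : 0 < b) (he : 0 ≤ e) (hd0 : 0 ≤ d) (hd : 1 < r → 0 < d) :
    (2 * (((r : ℝ) - 1) * d / 2 + e / 2 + b / 4)) *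
        (2 * (((r : ℝ) - 1) * d / 2 + e / 2 + b / 4) + 1) /
        ((2 * (((r : ℝ) - 1) * d / 2 + e / 2 + b / 4) + b / 2 + 1) *
          (2 * (((r : ℝ) - 1) * d / 2 + e / 2 + b / 4) + b / 2 + e)) *
      ∏ j ∈ Finset.Icc 2 r,
        (((((r : ℝ) - 1) * d / 2 + e / 2 + b / 4) -
              (((r : ℝ) - (j : ℝ)) * d / 2 + e / 2 + b / 4)) *
            ((((r : ℝ) - 1) * d / 2 + e / 2 + b / 4) +
              (((r : ℝ) - (j : ℝ)) * d / 2 + e / 2 + b / 4))) /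
          (((((r : ℝ) - 1) * d / 2 + e / 2 + b / 4) -
              (((r : ℝ) - (j : ℝ)) * d / 2 + e / 2 + b / 4) + d / 2) *
            ((((r : ℝ) - 1) * d / 2 + e / 2 + b / 4) +
              (((r : ℝ) - (j : ℝ)) * d / 2 + e / 2 + b / 4) + d / 2))
      = ((e + 1) + ((r : ℝ) - 1) * d + b / 2) /
          (2 * ((r : ℝ) * (((e + 1) + ((r : ℝ) - 1) * d + b / 2) + b / 2))) := by
  set ρ : ℝ := ((r : ℝ) - 1) * d / 2 + e / 2 + b / 4 with hρ
  have hr1 : (1 : ℝ) ≤ r := by exact_mod_cast hr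
  have h2ρ : 0 < 2 * ρ := by positivity
  have hρ_sub : ∀ i ∈ Ioo 1 r, 2 * ρ - ((i : ℝ) - 1) * (d / 2) ≠ 0 := fun i hi => by
    have hir : (i : ℝ) ≤ r := by exact_mod_cast (mem_Ioo.mp hi).2.le
    nlinarith [mul_le_mul_of_nonneg_right hir hd0]
  rw [prod_Icc_two_arith_prog_ratio hr ρ (d / 2) _ (fun j => by ring)
    (fun h => by linarith [hd h]) h2ρ.ne' hρ_sub,
    show 2 * ρ - ((r : ℝ) - 1) * (d / 2) = (2 * ρ + b / 2 + e) / 2 by rw [hρ]; ring,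
    show (e + 1) + ((r : ℝ) - 1) * d + b / 2 = 2 * ρ + 1 by rw [hρ]; ring,
    div_mul_div_comm, div_eq_div_iff (by positivity) (by positivity)]
  ring
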